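/- arXiv:2006.13787 — 2 statements merged into one kernel-verified Lean document; each statement's English description precedes it below -/
import Mathlib

section
/- Let S be a non-zero inverse semigroup with zero, K a field, I the singular ideal of K₀S. If every ideal of K₀S properly containing I contains a non-zero idempotent of S, then S is quasi-fundamental. -/
/-!
Let `s ≠ 0` commute with every idempotent and put `e = s* s`. Then `s μ e` for the maximal
idempotent-separating congruence `μ`, so `a = ι s - ι e` lies in the kernel `N` of
`K₀S → K₀(S/μ)`. If `a` is singular, then `a f = 0` for some non-zero idempotent `f ≤ e`,
i.e. `s f = f`, so `f ≤ s`. Otherwise the elements that are singular modulo `N` form an ideal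
properly containing the singular ideal (it contains `a`). By hypothesis it contains some `ι g`
with `g ≠ 0` idempotent, so `ι f = ι g ι f ∈ N` for some idempotent `0 ≠ f ≤ g`; but `μ`
separates `f` from `0`.
-/

/-- An inverse semigroup with zero. -/
class InverseSemigroup0 (S : Type*) extends Semigroup S, Zero S, Star S where
  zero_mul : ∀ s : S, 0 * s = 0
  mul_zero : ∀ s : S, s * 0 = 0
  mul_star_mul_self : ∀ s : S, s * star s * s = s
  star_mul_self_star : ∀ s : S, star s * s * star s = star s
  star_unique : ∀ s t : S, s * t * s = s → t * s * t = t → t = star s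

/-- The natural partial order on an inverse semigroup. -/
def NatLe {S : Type*} [InverseSemigroup0 S] (a b : S) : Prop := a = b * star a * a

variable (K S : Type*) [CommRing K] [InverseSemigroup0 S]

/-- The ring congruence on the semigroup algebra identifying the zero of `S`
with the zero of the algebra. -/
noncomputable def contractedCon : RingCon (MonoidAlgebra K S) :=
  ringConGen (fun a b => a = MonoidAlgebra.single (0 : S) (1 : K) ∧ b = 0)

/-- The contracted semigroup algebra `K₀S`: the `K`-algebra with basis `S \ {0}`
and multiplication extending that of `S`, realized as the quotient of the semigroup
algebra of `S` by the span of the zero of `S`. -/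
abbrev Kzero := (contractedCon K S).Quotient

/-- The quotient map onto the contracted semigroup algebra. -/
noncomputable def mk0 (a : MonoidAlgebra K S) : Kzero K S :=
  (a : (contractedCon K S).Quotient)

/-- The canonical map `S → K₀S`. -/
noncomputable def iota (s : S) : Kzero K S := mk0 K S (MonoidAlgebra.single s 1)

/-- An element of `K₀S` is singular if for every non-zero idempotent `e` there is a
non-zero idempotent `f ≤ e` with `a f = 0`. -/
noncomputable def Singular (x : Kzero K S) : Prop :=
  ∀ e : S, IsIdempotentElem e → e ≠ 0 →
    ∃ f : S, IsIdempotentElem f ∧ f ≠ 0 ∧ NatLe f e ∧ x * iota K S f = 0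

/-- `J` is a two-sided ideal of the (non-unital) ring `K₀S`. -/
def IsIdealSet (J : Set (Kzero K S)) : Prop :=
  (0 : Kzero K S) ∈ J ∧ (∀ a ∈ J, ∀ b ∈ J, a + b ∈ J) ∧ (∀ a ∈ J, -a ∈ J) ∧
    ∀ a ∈ J, ∀ x : Kzero K S, x * a ∈ J ∧ a * x ∈ J

/-- `S` is quasi-fundamental: every non-zero element of the centralizer of `E(S)`
lies above some non-zero idempotent. -/
def QuasiFundamental (S : Type*) [InverseSemigroup0 S] : Prop :=
  ∀ s : S, s ≠ 0 → (∀ e : S, IsIdempotentElem e → s * e = e * s) →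
    ∃ e : S, e ≠ 0 ∧ IsIdempotentElem e ∧ NatLe e s

namespace MonoidAlgebra

variable (K T : Type*) [Ring K] [SemigroupWithZero T]

lemma exists_mul_single_zero (w : MonoidAlgebra K T) (c : K) :
    ∃ c' : K, w * single (0 : T) c = single 0 c' := by
  induction w using MonoidAlgebra.induction with
  | zero => exact ⟨0, by simp⟩
  | single_add t b w _ _ ih =>
    obtain ⟨c', hc'⟩ := ih
    exact ⟨b * c + c', by rw [add_mul, hc', single_mul_single, mul_zero, single_add]⟩

lemma exists_single_zero_mul (w : MonoidAlgebra K T) (c : K) :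
    ∃ c' : K, single (0 : T) c * w = single 0 c' := by
  induction w using MonoidAlgebra.induction with
  | zero => exact ⟨0, by simp⟩
  | single_add t b w _ _ ih =>
    obtain ⟨c', hc'⟩ := ih
    exact ⟨c * b + c', by rw [mul_add, hc', single_mul_single, zero_mul, single_add]⟩

noncomputable def zeroLine : TwoSidedIdeal (MonoidAlgebra K T) :=
  .mk' (Set.range (single 0)) ⟨0, single_zero 0⟩
    (by rintro _ _ ⟨a, rfl⟩ ⟨b, rfl⟩; exact ⟨a + b, single_add 0 a b⟩)
    (by rintro _ ⟨a, rfl⟩; exact ⟨-a, single_neg 0 a⟩)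
    (by rintro x _ ⟨a, rfl⟩; exact (exists_mul_single_zero K T x a).imp fun _ h => h.symm)
    (by rintro _ y ⟨a, rfl⟩; exact (exists_single_zero_mul K T y a).imp fun _ h => h.symm)

variable {K T}

lemma mem_zeroLine {w : MonoidAlgebra K T} : w ∈ zeroLine K T ↔ ∃ c, single 0 c = w :=
  TwoSidedIdeal.mem_mk' ..

lemma eq_of_single_sub_single_mem_zeroLine [Nontrivial K] {u v : T}
    (h : single u (1 : K) - single v 1 ∈ zeroLine K T) : u = v := by
  classical
  obtain ⟨c, hc⟩ := mem_zeroLine.1 h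
  by_contra huv
  have hu := congrArg (fun w => w.coeff u) hc
  have hv := congrArg (fun w => w.coeff v) hc
  simp only [coeff_sub, coeff_single, Finsupp.sub_apply, Finsupp.single_apply] at hu hv
  grind [one_ne_zero]

lemma single_one_mem_zeroLine_iff [Nontrivial K] {u : T} :
    single u (1 : K) ∈ zeroLine K T ↔ u = 0 := by
  have h0 : single (0 : T) (1 : K) ∈ zeroLine K T := mem_zeroLine.2 ⟨1, rfl⟩
  exact ⟨fun h => eq_of_single_sub_single_mem_zeroLine (TwoSidedIdeal.sub_mem _ h h0),
    fun h => h ▸ h0⟩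

end MonoidAlgebra

open MonoidAlgebra

namespace Con

variable {T : Type*} [SemigroupWithZero T] (c : Con T)

instance : SemigroupWithZero c.Quotient where
  zero := ((0 : T) : c.Quotient)
  zero_mul x := Con.induction_on x fun t => congrArg _ (zero_mul t)
  mul_zero x := Con.induction_on x fun t => congrArg _ (mul_zero t)

lemma coe_zero : ((0 : T) : c.Quotient) = 0 := rfl

variable (K : Type*) [Ring K]

/-- The kernel of `K[T] → K₀(T ⧸ c)`. -/
noncomputable def contractedKer : TwoSidedIdeal (MonoidAlgebra K T) :=
  TwoSidedIdeal.comap (mapDomainNonUnitalRingHom K c.mkMulHom) (zeroLine K c.Quotient)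

variable {K c}

lemma single_mem_contractedKer_iff {t : T} {r : K} :
    single t r ∈ c.contractedKer K ↔ single (t : c.Quotient) r ∈ zeroLine K c.Quotient := by
  rw [contractedKer, TwoSidedIdeal.mem_comap, mapDomainNonUnitalRingHom_apply, mapDomain_single]
  rfl

lemma single_sub_single_mem_contractedKer {u v : T} (h : c u v) (r : K) :
    single u r - single v r ∈ c.contractedKer K := by
  rw [contractedKer, TwoSidedIdeal.mem_comap, map_sub, mapDomainNonUnitalRingHom_apply,
    mapDomainNonUnitalRingHom_apply, mapDomain_single, mapDomain_single, mkMulHom_apply,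
    mkMulHom_apply, c.eq.2 h, sub_self]
  exact TwoSidedIdeal.zero_mem _

lemma zeroLine_le_contractedKer : zeroLine K T ≤ c.contractedKer K := by
  rintro _ h
  obtain ⟨r, rfl⟩ := mem_zeroLine.1 h
  exact single_mem_contractedKer_iff.2 (mem_zeroLine.2 ⟨r, rfl⟩)

lemma single_one_mem_contractedKer_iff [Nontrivial K] {t : T} :
    single t (1 : K) ∈ c.contractedKer K ↔ c t 0 := by
  rw [single_mem_contractedKer_iff, single_one_mem_zeroLine_iff, ← coe_zero, Con.eq]

end Con

open InverseSemigroup0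

section

/-- Not a global instance: it would reroute how `S`'s multiplication and zero elaborate. -/
abbrev InverseSemigroup0.toSemigroupWithZero (S : Type*) [InverseSemigroup0 S] :
    SemigroupWithZero S where
  zero_mul := InverseSemigroup0.zero_mul
  mul_zero := InverseSemigroup0.mul_zero

attribute [local instance] InverseSemigroup0.toSemigroupWithZero

namespace InverseSemigroup0

variable {S : Type*} [InverseSemigroup0 S]

lemma star_star (s : S) : star (star s) = s :=
  (star_unique (star s) s (star_mul_self_star s) (mul_star_mul_self s)).symm

lemma _root_.IsIdempotentElem.star_eq {e : S} (he : IsIdempotentElem e) : star e = e := by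
  have : e * e * e = e := by rw [he.eq, he.eq]
  exact (star_unique e e this this).symm

lemma isIdempotentElem_mul_star (s : S) : IsIdempotentElem (s * star s) := by
  rw [IsIdempotentElem, ← mul_assoc, mul_star_mul_self]

lemma isIdempotentElem_star_mul (s : S) : IsIdempotentElem (star s * s) := by
  rw [IsIdempotentElem, ← mul_assoc, star_mul_self_star]

lemma eq_zero_of_star_mul_self_eq_zero {s : S} (h : star s * s = 0) : s = 0 := by
  rw [← mul_star_mul_self s, mul_assoc, h, MulZeroClass.mul_zero]

lemma eq_zero_of_mul_star_eq_zero {s : S} (h : s * star s = 0) : s = 0 := by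
  rw [← mul_star_mul_self s, h, MulZeroClass.zero_mul]

/-- `f (e f)* e` is again an inverse of `e f`, so it is `(e f)*`; this forces `(e f)*`,
hence `e f`, to be idempotent. -/
lemma isIdempotentElem_mul {e f : S} (he : IsIdempotentElem e) (hf : IsIdempotentElem f) :
    IsIdempotentElem (e * f) := by
  have h₁ : e * f * (f * star (e * f) * e) * (e * f) = e * f :=
    calc _ = e * f * star (e * f) * (e * f) := by
          simp only [mul_assoc, he.mul_self_mul, hf.mul_self_mul]
      _ = e * f := mul_star_mul_self _
  have h₂ : f * star (e * f) * e * (e * f) * (f * star (e * f) * e) = f * star (e * f) * e :=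
    calc _ = f * (star (e * f) * (e * f) * star (e * f)) * e := by
          simp only [mul_assoc, he.mul_self_mul, hf.mul_self_mul]
      _ = f * star (e * f) * e := by rw [star_mul_self_star, mul_assoc]
  have hx : f * star (e * f) * e = star (e * f) := star_unique _ _ h₁ h₂
  have hx_idem : IsIdempotentElem (star (e * f)) :=
    calc star (e * f) * star (e * f) = f * star (e * f) * e * (f * star (e * f) * e) := by
          rw [hx]
      _ = f * (star (e * f) * (e * f) * star (e * f)) * e := by simp only [mul_assoc]
      _ = star (e * f) := by rw [star_mul_self_star, hx]
  rw [← star_star (e * f), hx_idem.star_eq]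
  exact hx_idem

lemma _root_.IsIdempotentElem.commute {e f : S} (he : IsIdempotentElem e)
    (hf : IsIdempotentElem f) : Commute e f := by
  have hef := isIdempotentElem_mul he hf
  have hfe := isIdempotentElem_mul hf he
  have h₁ : e * f * (f * e) * (e * f) = e * f :=
    calc _ = e * f * (e * f) := by simp only [mul_assoc, he.mul_self_mul, hf.mul_self_mul]
      _ = e * f := hef.eq
  have h₂ : f * e * (e * f) * (f * e) = f * e :=
    calc _ = f * e * (f * e) := by simp only [mul_assoc, he.mul_self_mul, hf.mul_self_mul]
      _ = f * e := hfe.eq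
  show e * f = f * e
  rw [star_unique _ _ h₁ h₂, hef.star_eq]

lemma star_mul (a b : S) : star (a * b) = star b * star a := by
  have hab := ((isIdempotentElem_mul_star b).commute (isIdempotentElem_star_mul a)).eq
  have hba := ((isIdempotentElem_star_mul a).commute (isIdempotentElem_mul_star b)).eq
  have h₁ : a * b * (star b * star a) * (a * b) = a * b :=
    calc _ = a * (b * star b * (star a * a)) * b := by simp only [mul_assoc]
      _ = a * star a * a * (b * star b * b) := by rw [hab]; simp only [mul_assoc]
      _ = a * b := by rw [mul_star_mul_self, mul_star_mul_self]
  have h₂ : star b * star a * (a * b) * (star b * star a) = star b * star a :=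
    calc _ = star b * (star a * a * (b * star b)) * star a := by simp only [mul_assoc]
      _ = star b * b * star b * (star a * a * star a) := by rw [hba]; simp only [mul_assoc]
      _ = star b * star a := by rw [star_mul_self_star, star_mul_self_star]
  exact (star_unique _ _ h₁ h₂).symm

lemma natLe_iff_of_isIdempotentElem {f g : S} (hf : IsIdempotentElem f) :
    NatLe f g ↔ f = g * f := by
  rw [NatLe, hf.star_eq, mul_assoc, hf.eq]

lemma natLe_refl_of_isIdempotentElem {e : S} (he : IsIdempotentElem e) : NatLe e e :=
  (natLe_iff_of_isIdempotentElem he).2 he.eq.symm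

lemma natLe_trans_of_isIdempotentElem {e f g : S} (he : IsIdempotentElem e)
    (hf : IsIdempotentElem f) (hef : NatLe e f) (hfg : NatLe f g) : NatLe e g := by
  rw [natLe_iff_of_isIdempotentElem he] at hef ⊢
  rw [natLe_iff_of_isIdempotentElem hf] at hfg
  calc e = f * e := hef
    _ = g * f * e := by rw [← hfg]
    _ = g * e := by rw [mul_assoc, ← hef]

lemma isIdempotentElem_star_mul_mul {e : S} (he : IsIdempotentElem e) (t : S) :
    IsIdempotentElem (star t * e * t) :=
  calc star t * e * t * (star t * e * t) = star t * (e * (t * star t)) * e * t := by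
        simp only [mul_assoc]
    _ = star t * t * star t * (e * e) * t := by
        rw [(he.commute (isIdempotentElem_mul_star t)).eq]; simp only [mul_assoc]
    _ = star t * e * t := by rw [he.eq, star_mul_self_star]

lemma mul_star_mul_mul_of_natLe {u f : S} (hfu : f = u * star u * f) :
    u * (star u * f * u) = f * u :=
  calc _ = u * star u * f * u := by simp only [mul_assoc]
    _ = f * u := by rw [← hfu]

lemma star_mul_mul_ne_zero_of_natLe {u f : S} (hf : IsIdempotentElem f)
    (hfu : f = u * star u * f) (hf0 : f ≠ 0) : star u * f * u ≠ 0 := by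
  intro h
  apply hf0
  calc f = u * star u * f * (u * star u) := by
        rw [← hfu, (hf.commute (isIdempotentElem_mul_star u)).eq, ← hfu]
    _ = u * (star u * f * u) * star u := by simp only [mul_assoc]
    _ = 0 := by rw [h, MulZeroClass.mul_zero, MulZeroClass.zero_mul]

/-- The maximal idempotent-separating congruence `μ`. -/
def mu (S : Type*) [InverseSemigroup0 S] : Con S where
  r u v := ∀ e : S, IsIdempotentElem e → star u * e * u = star v * e * v
  iseqv := ⟨fun _ _ _ => rfl, fun h e he => (h e he).symm,
    fun h h' e he => (h e he).trans (h' e he)⟩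
  mul' {u v u' v'} h h' e he :=
    calc star (u * u') * e * (u * u') = star u' * (star u * e * u) * u' := by
          rw [star_mul]; simp only [mul_assoc]
      _ = star v' * (star v * e * v) * v' := by
          rw [h e he]; exact h' _ (isIdempotentElem_star_mul_mul he v)
      _ = star (v * v') * e * (v * v') := by rw [star_mul]; simp only [mul_assoc]

lemma eq_zero_of_mu_zero {t : S} (h : mu S t 0) : t = 0 := by
  have := h (t * star t) (isIdempotentElem_mul_star t)
  rw [MulZeroClass.mul_zero] at this
  apply eq_zero_of_star_mul_self_eq_zero
  rw [← this, ← (isIdempotentElem_star_mul t).eq]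
  simp only [mul_assoc]

lemma mu_star_mul_self {s : S} (hs : ∀ e : S, IsIdempotentElem e → s * e = e * s) :
    mu S s (star s * s) := by
  intro e he
  have he₀ := isIdempotentElem_star_mul s
  calc star s * e * s = star s * s * e := by rw [mul_assoc, ← hs e he, mul_assoc]
    _ = star s * s * (star s * s) * e := by rw [he₀.eq]
    _ = star (star s * s) * e * (star s * s) := by
        rw [he₀.star_eq, mul_assoc _ e, (he.commute he₀).eq, mul_assoc]

end InverseSemigroup0

section Kzero

variable {K S : Type*} [CommRing K] [InverseSemigroup0 S]

lemma contractedCon_eq_ringCon_zeroLine :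
    contractedCon K S = (zeroLine K S).ringCon := by
  refine le_antisymm (RingCon.ringConGen_le.2 ?_) fun a b hab => ?_
  · rintro _ _ ⟨rfl, rfl⟩
    rw [TwoSidedIdeal.rel_iff, sub_zero]
    exact mem_zeroLine.2 ⟨1, rfl⟩
  · obtain ⟨c, hc⟩ := mem_zeroLine.1 ((TwoSidedIdeal.rel_iff _ _ _).1 hab)
    have hgen : contractedCon K S (single 0 1) 0 := RingConGen.Rel.of _ _ ⟨rfl, rfl⟩
    have h := (contractedCon K S).add
      ((contractedCon K S).mul hgen ((contractedCon K S).refl (single 0 c)))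
      ((contractedCon K S).refl b)
    rwa [single_mul_single, MulZeroClass.mul_zero, one_mul, MulZeroClass.zero_mul, zero_add, hc,
      sub_add_cancel] at h

lemma mk0_eq_zero_iff {w : MonoidAlgebra K S} : mk0 K S w = 0 ↔ w ∈ zeroLine K S := by
  rw [mk0, ← RingCon.coe_zero, RingCon.eq, contractedCon_eq_ringCon_zeroLine]
  rfl

lemma mk0_surjective : Function.Surjective (mk0 K S) :=
  fun x => Quot.induction_on x fun w => ⟨w, rfl⟩

lemma mk0_sub (v w : MonoidAlgebra K S) : mk0 K S (v - w) = mk0 K S v - mk0 K S w := rfl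

lemma mk0_single_mul_mk0_single (t u : S) (b c : K) :
    mk0 K S (single t b) * mk0 K S (single u c) = mk0 K S (single (t * u) (b * c)) := by
  rw [← single_mul_single]; rfl

lemma mk0_single_zero (b : K) : mk0 K S (single 0 b) = 0 :=
  mk0_eq_zero_iff.2 (mem_zeroLine.2 ⟨b, rfl⟩)

lemma iota_mul_iota (u v : S) : iota K S u * iota K S v = iota K S (u * v) := by
  rw [iota, iota, mk0_single_mul_mk0_single, mul_one]; rfl

lemma iota_injective [Nontrivial K] : Function.Injective (iota K S) := fun u v h => by
  apply eq_of_single_sub_single_mem_zeroLine (K := K)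
  rw [← mk0_eq_zero_iff, mk0_sub]
  exact sub_eq_zero.2 h

noncomputable def TwoSidedIdeal.toKzero (I : TwoSidedIdeal (MonoidAlgebra K S)) :
    TwoSidedIdeal (Kzero K S) :=
  .mk' (mk0 K S '' I) ⟨0, I.zero_mem, rfl⟩
    (by rintro _ _ ⟨v, hv, rfl⟩ ⟨w, hw, rfl⟩; exact ⟨v + w, I.add_mem hv hw, rfl⟩)
    (by rintro _ ⟨v, hv, rfl⟩; exact ⟨-v, I.neg_mem hv, rfl⟩)
    (by
      rintro x _ ⟨w, hw, rfl⟩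
      obtain ⟨v, rfl⟩ := mk0_surjective x
      exact ⟨v * w, I.mul_mem_left v w hw, rfl⟩)
    (by
      rintro _ y ⟨w, hw, rfl⟩
      obtain ⟨v, rfl⟩ := mk0_surjective y
      exact ⟨w * v, I.mul_mem_right w v hw, rfl⟩)

lemma TwoSidedIdeal.mk0_mem_toKzero_iff {I : TwoSidedIdeal (MonoidAlgebra K S)}
    (hI : zeroLine K S ≤ I) {w : MonoidAlgebra K S} : mk0 K S w ∈ I.toKzero ↔ w ∈ I := by
  refine ⟨fun h => ?_, fun h => (TwoSidedIdeal.mem_mk' ..).2 ⟨w, h, rfl⟩⟩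
  obtain ⟨v, hv, hvw⟩ := (TwoSidedIdeal.mem_mk' ..).1 h
  have hdiff : v - w ∈ I := hI (mk0_eq_zero_iff.1 (by rw [mk0_sub, hvw, sub_self]))
  simpa using I.sub_mem hv hdiff

end Kzero

section Singular

variable {K S : Type*} [CommRing K] [InverseSemigroup0 S]

variable (K S) in
/-- The kernel of `K₀S → K₀(S/μ)`. -/
noncomputable def muKer : TwoSidedIdeal (Kzero K S) :=
  ((mu S).contractedKer K).toKzero

lemma iota_mem_muKer_iff [Nontrivial K] {t : S} : iota K S t ∈ muKer K S ↔ t = 0 := by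
  rw [iota, muKer, TwoSidedIdeal.mk0_mem_toKzero_iff Con.zeroLine_le_contractedKer,
    Con.single_one_mem_contractedKer_iff]
  exact ⟨eq_zero_of_mu_zero, fun h => h ▸ (mu S).refl 0⟩

lemma iota_sub_iota_mem_muKer {u v : S} (h : mu S u v) : iota K S u - iota K S v ∈ muKer K S := by
  rw [iota, iota, ← mk0_sub, muKer, TwoSidedIdeal.mk0_mem_toKzero_iff Con.zeroLine_le_contractedKer]
  exact Con.single_sub_single_mem_contractedKer h 1

def SingularMod (N : TwoSidedIdeal (Kzero K S)) (x : Kzero K S) : Prop :=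
  ∀ e : S, IsIdempotentElem e → e ≠ 0 →
    ∃ f : S, IsIdempotentElem f ∧ f ≠ 0 ∧ NatLe f e ∧ x * iota K S f ∈ N

namespace SingularMod

variable {N : TwoSidedIdeal (Kzero K S)} {x y : Kzero K S}

lemma of_singular (hx : Singular K S x) : SingularMod N x := fun e he he0 =>
  (hx e he he0).imp fun _ ⟨hf, hf0, hfe, hxf⟩ => ⟨hf, hf0, hfe, hxf ▸ N.zero_mem⟩

lemma of_mem (hx : x ∈ N) : SingularMod N x := fun e he he0 =>
  ⟨e, he, he0, natLe_refl_of_isIdempotentElem he, N.mul_mem_right _ _ hx⟩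

lemma mul_iota_mem_of_natLe {e f : S} (hf : IsIdempotentElem f) (hfe : NatLe f e)
    (hx : x * iota K S e ∈ N) : x * iota K S f ∈ N := by
  rw [(natLe_iff_of_isIdempotentElem hf).1 hfe, ← iota_mul_iota, ← mul_assoc]
  exact N.mul_mem_right _ _ hx

lemma add (hx : SingularMod N x) (hy : SingularMod N y) : SingularMod N (x + y) := by
  intro e he he0
  obtain ⟨f₁, hf₁, hf₁0, hf₁e, hxf₁⟩ := hx e he he0
  obtain ⟨f₂, hf₂, hf₂0, hf₂f₁, hyf₂⟩ := hy f₁ hf₁ hf₁0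
  refine ⟨f₂, hf₂, hf₂0, natLe_trans_of_isIdempotentElem hf₂ hf₁ hf₂f₁ hf₁e, ?_⟩
  rw [add_mul]
  exact N.add_mem (mul_iota_mem_of_natLe hf₂ hf₂f₁ hxf₁) hyf₂

lemma neg (hx : SingularMod N x) : SingularMod N (-x) := fun e he he0 =>
  (hx e he he0).imp fun _ ⟨hf, hf0, hfe, hxf⟩ => ⟨hf, hf0, hfe, neg_mul x _ ▸ N.neg_mem hxf⟩

lemma mul_left (hx : SingularMod N x) (z : Kzero K S) : SingularMod N (z * x) := fun e he he0 =>
  (hx e he he0).imp fun _ ⟨hf, hf0, hfe, hxf⟩ =>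
    ⟨hf, hf0, hfe, mul_assoc z x _ ▸ N.mul_mem_left _ _ hxf⟩

/-- Below `e` we look at `u = t e`: an idempotent `f' ≤ u u*` with `x f' ∈ N` is transported
to `f = u* f' u ≤ e`, and `t f = f' u`. -/
lemma mul_mk0_single (hx : SingularMod N x) (t : S) (b : K) :
    SingularMod N (x * mk0 K S (single t b)) := by
  intro e he he0
  by_cases hte : t * e = 0
  · refine ⟨e, he, he0, natLe_refl_of_isIdempotentElem he, ?_⟩
    rw [iota, mul_assoc, mk0_single_mul_mk0_single, hte, mk0_single_zero, MulZeroClass.mul_zero]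
    exact N.zero_mem
  set u := t * e
  obtain ⟨f', hf', hf'0, hf'u, hxf'⟩ := hx (u * star u) (isIdempotentElem_mul_star u)
    fun h => hte (eq_zero_of_mul_star_eq_zero h)
  rw [natLe_iff_of_isIdempotentElem hf'] at hf'u
  have hef : e * (star u * f' * u) = star u * f' * u := by
    rw [InverseSemigroup0.star_mul, he.star_eq]
    simp only [mul_assoc, he.mul_self_mul]
  have htf : t * (star u * f' * u) = f' * u := by
    rw [← hef, ← mul_assoc, mul_star_mul_mul_of_natLe hf'u]
  refine ⟨star u * f' * u, isIdempotentElem_star_mul_mul hf' u,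
    star_mul_mul_ne_zero_of_natLe hf' hf'u hf'0,
    (natLe_iff_of_isIdempotentElem (isIdempotentElem_star_mul_mul hf' u)).2 hef.symm, ?_⟩
  have hsplit : mk0 K S (single (f' * u) b) = iota K S f' * mk0 K S (single u b) := by
    rw [iota, mk0_single_mul_mk0_single, one_mul]
  rw [iota, mul_assoc, mk0_single_mul_mk0_single, htf, mul_one, hsplit, ← mul_assoc]
  exact N.mul_mem_right _ _ hxf'

lemma mul_right (hx : SingularMod N x) (z : Kzero K S) : SingularMod N (x * z) := by
  obtain ⟨w, rfl⟩ := mk0_surjective z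
  induction w using MonoidAlgebra.induction with
  | zero => exact (MulZeroClass.mul_zero x).symm ▸ of_mem N.zero_mem
  | single_add t b w _ _ ih =>
    rw [show mk0 K S (single t b + w) = mk0 K S (single t b) + mk0 K S w from rfl, mul_add]
    exact (hx.mul_mk0_single t b).add ih

end SingularMod

variable (K S) in
noncomputable def singularModIdeal (N : TwoSidedIdeal (Kzero K S)) : TwoSidedIdeal (Kzero K S) :=
  .mk' {x | SingularMod N x} (SingularMod.of_mem N.zero_mem) SingularMod.add SingularMod.neg
    (fun hy => hy.mul_left _) (fun hx => hx.mul_right _)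

lemma mem_singularModIdeal {N : TwoSidedIdeal (Kzero K S)} {x : Kzero K S} :
    x ∈ singularModIdeal K S N ↔ SingularMod N x :=
  TwoSidedIdeal.mem_mk' ..

lemma TwoSidedIdeal.isIdealSet (J : TwoSidedIdeal (Kzero K S)) : IsIdealSet K S J :=
  ⟨J.zero_mem, fun _ ha _ hb => J.add_mem ha hb, fun _ ha => J.neg_mem ha,
    fun a ha x => ⟨J.mul_mem_left x a ha, J.mul_mem_right a x ha⟩⟩

lemma not_singularMod_muKer_iota [Nontrivial K] {g : S} (hg : IsIdempotentElem g) (hg0 : g ≠ 0) :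
    ¬ SingularMod (muKer K S) (iota K S g) := fun h => by
  obtain ⟨f, hf, hf0, hfg, hgf⟩ := h g hg hg0
  rw [iota_mul_iota, ← (natLe_iff_of_isIdempotentElem hf).1 hfg, iota_mem_muKer_iff] at hgf
  exact hf0 hgf

lemma exists_natLe_of_singular_iota_sub [Nontrivial K] {s : S} (hs : s ≠ 0)
    (h : Singular K S (iota K S s - iota K S (star s * s))) :
    ∃ e : S, e ≠ 0 ∧ IsIdempotentElem e ∧ NatLe e s := by
  have hs₀ : star s * s ≠ 0 := fun h0 => hs (eq_zero_of_star_mul_self_eq_zero h0)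
  obtain ⟨f, hf, hf0, hfs, hsf⟩ := h (star s * s) (isIdempotentElem_star_mul s) hs₀
  rw [sub_mul, sub_eq_zero, iota_mul_iota, iota_mul_iota,
    ← (natLe_iff_of_isIdempotentElem hf).1 hfs] at hsf
  exact ⟨f, hf0, hf, (natLe_iff_of_isIdempotentElem hf).2 (iota_injective hsf).symm⟩

end Singular

end

theorem stmt13_general {K S : Type*} [Field K] [InverseSemigroup0 S]
    (h : ∀ J : Set (Kzero K S), IsIdealSet K S J →
      {x : Kzero K S | Singular K S x} ⊆ J → {x : Kzero K S | Singular K S x} ≠ J →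
      ∃ e : S, IsIdempotentElem e ∧ e ≠ 0 ∧ iota K S e ∈ J) :
    QuasiFundamental S := by
  intro s hs hcomm
  by_cases ha : Singular K S (iota K S s - iota K S (star s * s))
  · exact exists_natLe_of_singular_iota_sub hs ha
  have hμ : SingularMod (muKer K S) (iota K S s - iota K S (star s * s)) :=
    .of_mem (iota_sub_iota_mem_muKer (mu_star_mul_self hcomm))
  obtain ⟨g, hg, hg0, hgJ⟩ := h (singularModIdeal K S (muKer K S)) (TwoSidedIdeal.isIdealSet _)
    (fun x hx => mem_singularModIdeal.2 (SingularMod.of_singular hx))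
    (fun heq => ha ((Set.ext_iff.1 heq _).2 (mem_singularModIdeal.2 hμ)))
  exact (not_singularMod_muKer_iota hg hg0 (mem_singularModIdeal.1 hgJ)).elim

/-- If `S` is a non-zero inverse semigroup with zero and every ideal of `K₀S` properly
containing the singular ideal contains a non-zero idempotent of `S`, then `S` is
quasi-fundamental. -/
theorem stmt13 {K S : Type*} [Field K] [InverseSemigroup0 S]
    (hS : ∃ s : S, s ≠ 0)
    (h : ∀ J : Set (Kzero K S), IsIdealSet K S J →
      {x : Kzero K S | Singular K S x} ⊆ J → {x : Kzero K S | Singular K S x} ≠ J →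
      ∃ e : S, IsIdempotentElem e ∧ e ≠ 0 ∧ iota K S e ∈ J) :
    QuasiFundamental S :=
  stmt13_general h
end

section
/- Let G be a group with a faithful self-similar action on X* with |X| ≥ 2, and let S be the associated inverse hull. Then S is a Hausdorff inverse semigroup if and only if for each g ∈ G there is a finite set F_g ⊆ X* such that F_g X* is exactly the set of words strongly fixed by g. Moreover, an idempotent w w* lies below u g v* in the natural partial order if and only if u = v, w = v z, and g strongly fixes z. -/
/-!
Multiplying `u g v*` by the idempotent `(v r)(v r)*` gives `u g(r) g|_r (v r)*`, and every
non-zero element below `u g v*` arises this way. Hence `u g v*` and `u' h v'*` have a non-zero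
common lower bound only if `v, v'` are comparable. If `v' = v p`, restricting `u g v*` at `p`
does not change the common lower bounds and reduces to the case `v = v'`; then (when also
`u = u'`) the common lower bounds are the restrictions of `u h v*` at the words strongly fixed by
`h⁻¹ g`. So every `s↓ ∩ t↓` is finitely generated when each set of strongly fixed words has the
form `F X*`, and conversely `g↓ ∩ 1↓` consists of `0` and the idempotents `w w*` with `w`
strongly fixed by `g`.
-/

/-- A self-similar action of a group `G` on the free monoid on the alphabet `X`:
an action on letters together with restrictions `g|_x`, satisfying the self-similarity
axioms. -/
structure SelfSimilarAction (G X : Type*) [Group G] where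
  act : G → X → X
  res : G → X → G
  act_one : ∀ x, act 1 x = x
  act_mul : ∀ g h x, act (g * h) x = act g (act h x)
  res_one : ∀ x, res 1 x = 1
  res_mul : ∀ g h x, res (g * h) x = res g (act h x) * res h x

namespace SelfSimilarAction

variable {G X : Type*} [Group G] (σ : SelfSimilarAction G X)

/-- The induced action of `g ∈ G` on finite words. -/
def actW (g : G) : List X → List X
  | [] => []
  | x :: u => σ.act g x :: actW (σ.res g x) u

/-- The restriction `g|_w` of `g ∈ G` at a finite word `w`. -/
def resW (g : G) : List X → G
  | [] => g
  | x :: u => resW (σ.res g x) u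

/-- A word `w` is strongly fixed by `g` if `g(w) = w` and `g|_w = 1`. -/
def SFix (g : G) (w : List X) : Prop := σ.actW g w = w ∧ σ.resW g w = 1

/-- The self-similar action is faithful: `G` acts faithfully on `X*`. -/
def Faithful : Prop := ∀ g : G, (∀ w : List X, σ.actW g w = w) → g = 1

end SelfSimilarAction

namespace SelfSimilarAction

variable {G X : Type*} [Group G] [DecidableEq X] (σ : SelfSimilarAction G X)

/-- The underlying set of the inverse hull `S` of `M = X* G`: zero (encoded by `none`)
together with the elements `u g v*`. -/
abbrev IH (G X : Type*) := Option (List X × G × List X)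

/-- The product `(u g v*)(w h z*)` in the inverse hull, computed by the rules
`g x = g(x) g|_x`, `x* g = g|_{g⁻¹(x)} (g⁻¹(x))*` and `x* y = δ_{x,y}`. -/
def triMul (a b : List X × G × List X) : IH G X :=
  if a.2.2 <+: b.1 then
    let r := b.1.drop a.2.2.length
    some (a.1 ++ σ.actW a.2.1 r, σ.resW a.2.1 r * b.2.1, b.2.2)
  else if b.1 <+: a.2.2 then
    let r := a.2.2.drop b.1.length
    let r' := σ.actW b.2.1⁻¹ r
    some (a.1, a.2.1 * σ.resW b.2.1 r', b.2.2 ++ r')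
  else none

/-- The multiplication of the inverse hull. -/
def ihMul : IH G X → IH G X → IH G X
  | some a, some b => σ.triMul a b
  | _, _ => none

/-- The inversion `(u g v*)* = v g⁻¹ u*` of the inverse hull. -/
def ihStar : IH G X → IH G X :=
  Option.map fun a => (a.2.2, a.2.1⁻¹, a.1)

/-- The natural partial order of the inverse hull: `a ≤ b` iff `a = b a* a`. -/
def ihLe (a b : IH G X) : Prop := a = σ.ihMul (σ.ihMul b (ihStar a)) a

/-- The inverse hull is Hausdorff: for all `s, t` the order ideal `s↓ ∩ t↓` is
finitely generated. -/
def IHHausdorff : Prop :=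
  ∀ s t : IH G X, ∃ F : Finset (IH G X),
    {x : IH G X | σ.ihLe x s ∧ σ.ihLe x t} = {x : IH G X | ∃ f ∈ F, σ.ihLe x f}

end SelfSimilarAction

namespace SelfSimilarAction

section Words

variable {G X : Type*} [Group G] (σ : SelfSimilarAction G X)

@[simp] lemma actW_nil (g : G) : σ.actW g [] = [] := rfl

@[simp] lemma actW_cons (g : G) (x : X) (u : List X) :
    σ.actW g (x :: u) = σ.act g x :: σ.actW (σ.res g x) u := rfl

@[simp] lemma resW_nil (g : G) : σ.resW g [] = g := rfl

@[simp] lemma resW_cons (g : G) (x : X) (u : List X) :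
    σ.resW g (x :: u) = σ.resW (σ.res g x) u := rfl

@[simp] lemma length_actW (g : G) (u : List X) : (σ.actW g u).length = u.length := by
  induction u generalizing g with
  | nil => rfl
  | cons x u ih => simp [ih]

@[simp] lemma actW_eq_nil_iff (g : G) (u : List X) : σ.actW g u = [] ↔ u = [] := by
  cases u <;> simp

@[simp] lemma actW_one (u : List X) : σ.actW 1 u = u := by
  induction u with
  | nil => rfl
  | cons x u ih => simp [σ.act_one, σ.res_one, ih]

@[simp] lemma resW_one (u : List X) : σ.resW 1 u = 1 := by
  induction u with
  | nil => rfl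
  | cons x u ih => simp [σ.res_one, ih]

lemma actW_mul (g h : G) (u : List X) : σ.actW (g * h) u = σ.actW g (σ.actW h u) := by
  induction u generalizing g h with
  | nil => rfl
  | cons x u ih => simp [σ.act_mul, σ.res_mul, ih]

lemma resW_mul (g h : G) (u : List X) :
    σ.resW (g * h) u = σ.resW g (σ.actW h u) * σ.resW h u := by
  induction u generalizing g h with
  | nil => rfl
  | cons x u ih => simp [σ.res_mul, ih]

lemma actW_append (g : G) (u v : List X) :
    σ.actW g (u ++ v) = σ.actW g u ++ σ.actW (σ.resW g u) v := by
  induction u generalizing g with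
  | nil => rfl
  | cons x u ih => simp [ih]

lemma resW_append (g : G) (u v : List X) : σ.resW g (u ++ v) = σ.resW (σ.resW g u) v := by
  induction u generalizing g with
  | nil => rfl
  | cons x u ih => simp [ih]

@[simp] lemma actW_inv_actW (g : G) (u : List X) : σ.actW g⁻¹ (σ.actW g u) = u := by
  rw [← actW_mul, inv_mul_cancel, actW_one]

lemma sFix_append {g : G} {w : List X} (hw : σ.SFix g w) (q : List X) : σ.SFix g (w ++ q) :=
  ⟨by rw [actW_append, hw.1, hw.2, actW_one], by rw [resW_append, hw.2, resW_one]⟩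

lemma sFix_inv_mul_iff (g h : G) (w : List X) :
    σ.SFix (h⁻¹ * g) w ↔ σ.actW g w = σ.actW h w ∧ σ.resW g w = σ.resW h w := by
  constructor
  · rintro ⟨hact, hres⟩
    have hg : g = h * (h⁻¹ * g) := by group
    rw [hg, actW_mul, hact, resW_mul, hact, hres, mul_one]
    exact ⟨rfl, rfl⟩
  · rintro ⟨hact, hres⟩
    rw [SFix, actW_mul, hact, actW_inv_actW, resW_mul, hact, hres, ← resW_mul, inv_mul_cancel,
      resW_one]
    exact ⟨rfl, rfl⟩

/-- `σ.restrict (u, g, v) r` is `u g v* · (v r)(v r)* = u g(r) g|_r (v r)*`. -/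
def restrict (a : List X × G × List X) (r : List X) : List X × G × List X :=
  (a.1 ++ σ.actW a.2.1 r, σ.resW a.2.1 r, a.2.2 ++ r)

@[simp] lemma restrict_nil (a : List X × G × List X) : σ.restrict a [] = a := by
  simp [restrict]

lemma restrict_restrict (a : List X × G × List X) (p q : List X) :
    σ.restrict (σ.restrict a p) q = σ.restrict a (p ++ q) := by
  simp [restrict, actW_append, resW_append]

lemma restrict_eq_restrict_iff (u₁ u₂ : List X) (g h : G) (v r r' : List X) :
    σ.restrict (u₁, g, v) r = σ.restrict (u₂, h, v) r' ↔
      r = r' ∧ u₁ = u₂ ∧ σ.SFix (h⁻¹ * g) r := by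
  simp only [restrict, Prod.mk.injEq, List.append_cancel_left_eq, sFix_inv_mul_iff]
  constructor
  · rintro ⟨hu, hres, rfl⟩
    obtain ⟨rfl, hact⟩ := List.append_inj' hu (by simp)
    exact ⟨rfl, rfl, hact, hres⟩
  · rintro ⟨rfl, rfl, hact, hres⟩
    exact ⟨by rw [hact], hres, rfl⟩

end Words

section InverseHull

variable {G X : Type*} [Group G] [DecidableEq X] (σ : SelfSimilarAction G X)

@[simp] lemma ihMul_some (a b : List X × G × List X) :
    σ.ihMul (some a) (some b) = σ.triMul a b := rfl

@[simp] lemma ihMul_none_left (x : IH G X) : σ.ihMul none x = none := by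
  cases x <;> rfl

lemma triMul_append_left (u : List X) (g : G) (v r : List X) (h : G) (z : List X) :
    σ.triMul (u, g, v) (v ++ r, h, z) = some (u ++ σ.actW g r, σ.resW g r * h, z) := by
  simp [triMul]

lemma triMul_self_left (u : List X) (g : G) (v : List X) (h : G) (z : List X) :
    σ.triMul (u, g, v) (v, h, z) = some (u, g * h, z) := by
  simpa using σ.triMul_append_left u g v [] h z

lemma triMul_append_right (u : List X) (g : G) (v r : List X) (hr : r ≠ []) (h : G)
    (z : List X) :
    σ.triMul (u, g, v ++ r) (v, h, z) =
      some (u, g * σ.resW h (σ.actW h⁻¹ r), z ++ σ.actW h⁻¹ r) := by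
  have hnot : ¬ v ++ r <+: v := fun hp => hr (by simpa using hp.length_le)
  simp [triMul, hnot]

lemma triMul_eq_none (u : List X) (g : G) (v w : List X) (h : G) (z : List X)
    (hvw : ¬ v <+: w) (hwv : ¬ w <+: v) : σ.triMul (u, g, v) (w, h, z) = none := by
  simp [triMul, hvw, hwv]

lemma ihLe_some_iff (b a : List X × G × List X) :
    σ.ihLe (some b) (some a) ↔ ∃ r, b = σ.restrict a r := by
  obtain ⟨w, k, z⟩ := b
  obtain ⟨u, g, v⟩ := a
  simp only [ihLe, ihStar, Option.map_some, ihMul_some]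
  by_cases hvz : v <+: z
  · obtain ⟨r, rfl⟩ := hvz
    rw [triMul_append_left, ihMul_some, triMul_self_left, inv_mul_cancel_right]
    simp only [restrict, Option.some.injEq, Prod.mk.injEq, List.append_cancel_left_eq]
    exact ⟨fun ⟨hw, hk, _⟩ => ⟨r, hw, hk, rfl⟩, fun ⟨_, hw, hk, hr⟩ => hr ▸ ⟨hw, hk, trivial⟩⟩
  refine iff_of_false ?_ fun ⟨r, hr⟩ => hvz ⟨r, (congrArg (·.2.2) hr).symm⟩
  by_cases hzv : z <+: v
  · obtain ⟨r, rfl⟩ := hzv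
    have hr : r ≠ [] := by rintro rfl; simp at hvz
    -- the third component of the product is `z r`, not `z`
    rw [σ.triMul_append_right _ _ _ _ hr, inv_inv, ihMul_some,
      σ.triMul_append_right _ _ _ _ (by simpa using hr), actW_inv_actW]
    simp [hr]
  · simp [σ.triMul_eq_none _ _ _ _ _ _ hvz hzv]

lemma ihLe_none_left (x : IH G X) : σ.ihLe none x := by
  cases x <;> rfl

lemma ihLe_none_iff (x : IH G X) : σ.ihLe x none ↔ x = none := by
  cases x <;> simp [ihLe]

lemma ihLe_iff (x : IH G X) (a : List X × G × List X) :
    σ.ihLe x (some a) ↔ x = none ∨ ∃ r, x = some (σ.restrict a r) := by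
  cases x with
  | none => simp [ihLe_none_left]
  | some b => simp [ihLe_some_iff]

lemma ihLe_refl (x : IH G X) : σ.ihLe x x := by
  cases x with
  | none => exact σ.ihLe_none_left none
  | some a => exact (σ.ihLe_some_iff a a).2 ⟨[], (σ.restrict_nil a).symm⟩

lemma ihLe_of_ihLe_restrict {x : IH G X} {a : List X × G × List X} {p : List X}
    (hx : σ.ihLe x (some (σ.restrict a p))) : σ.ihLe x (some a) := by
  rw [ihLe_iff] at hx ⊢
  obtain hx | ⟨q, rfl⟩ := hx
  · exact .inl hx
  · exact .inr ⟨p ++ q, by rw [restrict_restrict]⟩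

lemma ihLe_and_ihLe_iff_of_same_dom (x : IH G X) (u₁ u₂ : List X) (g h : G) (v : List X) :
    σ.ihLe x (some (u₁, g, v)) ∧ σ.ihLe x (some (u₂, h, v)) ↔
      x = none ∨ u₁ = u₂ ∧ ∃ r, σ.SFix (h⁻¹ * g) r ∧ x = some (σ.restrict (u₂, h, v) r) := by
  cases x with
  | none => simp [ihLe_none_left]
  | some b =>
    simp only [ihLe_some_iff, reduceCtorEq, false_or, Option.some.injEq]
    constructor
    · rintro ⟨⟨r, rfl⟩, r', hr⟩
      obtain ⟨rfl, rfl, hfix⟩ := (σ.restrict_eq_restrict_iff _ _ _ _ _ _ _).1 hr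
      exact ⟨rfl, r, hfix, hr⟩
    · rintro ⟨rfl, r, hfix, rfl⟩
      exact ⟨⟨r, ((σ.restrict_eq_restrict_iff _ _ _ _ _ _ _).2 ⟨rfl, rfl, hfix⟩).symm⟩, r, rfl⟩

lemma ihLe_and_ihLe_iff_of_prefix (x : IH G X) (a b : List X × G × List X) (p : List X)
    (hp : b.2.2 = a.2.2 ++ p) :
    σ.ihLe x (some a) ∧ σ.ihLe x (some b) ↔
      σ.ihLe x (some (σ.restrict a p)) ∧ σ.ihLe x (some b) := by
  refine ⟨fun ⟨ha, hb⟩ => ⟨?_, hb⟩, fun ⟨ha, hb⟩ => ⟨σ.ihLe_of_ihLe_restrict ha, hb⟩⟩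
  rw [ihLe_iff] at ha hb ⊢
  obtain rfl | ⟨r, rfl⟩ := ha
  · exact .inl rfl
  obtain hb | ⟨r', hr'⟩ := hb
  · exact .inl hb
  have hr : r = p ++ r' := by
    simpa [restrict, hp] using congrArg (·.2.2) (Option.some.inj hr')
  exact .inr ⟨r', by rw [restrict_restrict, hr]⟩

lemma eq_none_of_ihLe_of_ihLe {x : IH G X} {a b : List X × G × List X}
    (hab : ¬ a.2.2 <+: b.2.2) (hba : ¬ b.2.2 <+: a.2.2)
    (ha : σ.ihLe x (some a)) (hb : σ.ihLe x (some b)) : x = none := by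
  rw [ihLe_iff] at ha hb
  obtain ha | ⟨r, rfl⟩ := ha
  · exact ha
  obtain hb | ⟨r', hr'⟩ := hb
  · exact hb
  have hz : a.2.2 ++ r = b.2.2 ++ r' := by
    simpa [restrict] using congrArg (·.2.2) (Option.some.inj hr')
  obtain h | h := List.prefix_or_prefix_of_prefix ⟨r, hz⟩ ⟨r', rfl⟩
  exacts [absurd h hab, absurd h hba]

lemma ihLe_idempotent_iff (u : List X) (g : G) (v w : List X) :
    σ.ihLe (some (w, 1, w)) (some (u, g, v)) ↔ u = v ∧ ∃ z, w = v ++ z ∧ σ.SFix g z := by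
  simp only [ihLe_some_iff, restrict, Prod.mk.injEq]
  constructor
  · rintro ⟨r, hw, hres, hw'⟩
    obtain ⟨hu, hact⟩ := List.append_inj' (hw.symm.trans hw') (by simp)
    exact ⟨hu, r, hw', hact, hres.symm⟩
  · rintro ⟨rfl, z, rfl, hact, hres⟩
    exact ⟨z, by rw [hact], hres.symm, rfl⟩

def FinitelyGenerated (A : Set (IH G X)) : Prop :=
  ∃ F : Finset (IH G X), A = {x | ∃ f ∈ F, σ.ihLe x f}

lemma finitelyGenerated_of_forall_eq_none {s t : IH G X}
    (h : ∀ x, σ.ihLe x s → σ.ihLe x t → x = none) :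
    σ.FinitelyGenerated {x | σ.ihLe x s ∧ σ.ihLe x t} := by
  refine ⟨{none}, Set.ext fun x => ?_⟩
  simp only [Set.mem_ofPred_eq, Finset.mem_singleton, exists_eq_left, ihLe_none_iff]
  exact ⟨fun ⟨hs, ht⟩ => h x hs ht, by rintro rfl; exact ⟨σ.ihLe_none_left s, σ.ihLe_none_left t⟩⟩

lemma finitelyGenerated_of_same_dom (u₁ u₂ : List X) (g h : G) (v : List X) {F : Finset (List X)}
    (hF : {w | σ.SFix (h⁻¹ * g) w} = {w | ∃ f ∈ F, ∃ q, w = f ++ q}) :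
    σ.FinitelyGenerated {x | σ.ihLe x (some (u₁, g, v)) ∧ σ.ihLe x (some (u₂, h, v))} := by
  classical
  by_cases hu : u₁ = u₂
  swap
  · exact σ.finitelyGenerated_of_forall_eq_none fun x h₁ h₂ =>
      ((σ.ihLe_and_ihLe_iff_of_same_dom x _ _ _ _ _).1 ⟨h₁, h₂⟩).resolve_right (hu ·.1)
  subst hu
  have hmem (w : List X) : σ.SFix (h⁻¹ * g) w ↔ ∃ f ∈ F, ∃ q, w = f ++ q := Set.ext_iff.1 hF w
  refine ⟨insert none (F.image fun f => some (σ.restrict (u₁, h, v) f)), Set.ext fun x => ?_⟩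
  simp only [Set.mem_ofPred_eq, ihLe_and_ihLe_iff_of_same_dom, true_and]
  constructor
  · rintro (rfl | ⟨r, hr, rfl⟩)
    · exact ⟨none, Finset.mem_insert_self _ _, σ.ihLe_none_left none⟩
    · obtain ⟨f, hf, q, rfl⟩ := (hmem r).1 hr
      exact ⟨_, Finset.mem_insert_of_mem (Finset.mem_image_of_mem _ hf),
        (σ.ihLe_some_iff _ _).2 ⟨q, (σ.restrict_restrict _ _ _).symm⟩⟩
  · rintro ⟨_, hgen, hx⟩
    obtain rfl | hgen := Finset.mem_insert.1 hgen
    · exact .inl ((σ.ihLe_none_iff x).1 hx)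
    obtain ⟨f, hf, rfl⟩ := Finset.mem_image.1 hgen
    obtain rfl | ⟨q, rfl⟩ := (σ.ihLe_iff _ _).1 hx
    · exact .inl rfl
    · exact .inr ⟨f ++ q, (hmem _).2 ⟨f, hf, q, rfl⟩, by rw [restrict_restrict]⟩

lemma finitelyGenerated_of_prefix
    (hfin : ∀ g : G, ∃ F : Finset (List X),
      {w | σ.SFix g w} = {w | ∃ f ∈ F, ∃ r, w = f ++ r})
    (a b : List X × G × List X) (hab : a.2.2 <+: b.2.2) :
    σ.FinitelyGenerated {x | σ.ihLe x (some a) ∧ σ.ihLe x (some b)} := by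
  obtain ⟨p, hp⟩ := hab
  rw [Set.ext fun x => σ.ihLe_and_ihLe_iff_of_prefix x a b p hp.symm]
  obtain ⟨u, h, v⟩ := b
  obtain ⟨F, hF⟩ := hfin (h⁻¹ * σ.resW a.2.1 p)
  subst hp
  exact σ.finitelyGenerated_of_same_dom _ _ _ _ _ hF

theorem ihHausdorff_of_forall_sFix_eq
    (hfin : ∀ g : G, ∃ F : Finset (List X),
      {w | σ.SFix g w} = {w | ∃ f ∈ F, ∃ r, w = f ++ r}) :
    σ.IHHausdorff := by
  rintro (_ | a) t
  · exact σ.finitelyGenerated_of_forall_eq_none fun x hx _ => (σ.ihLe_none_iff x).1 hx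
  rcases t with _ | b
  · exact σ.finitelyGenerated_of_forall_eq_none fun x _ hx => (σ.ihLe_none_iff x).1 hx
  by_cases hab : a.2.2 <+: b.2.2
  · exact σ.finitelyGenerated_of_prefix hfin a b hab
  by_cases hba : b.2.2 <+: a.2.2
  · simpa only [FinitelyGenerated, and_comm] using σ.finitelyGenerated_of_prefix hfin b a hba
  exact σ.finitelyGenerated_of_forall_eq_none fun x => σ.eq_none_of_ihLe_of_ihLe hab hba

theorem exists_finset_sFix_eq_of_ihHausdorff (hH : σ.IHHausdorff) (g : G) :
    ∃ F : Finset (List X), {w | σ.SFix g w} = {w | ∃ f ∈ F, ∃ r, w = f ++ r} := by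
  obtain ⟨F, hF⟩ := hH (some ([], g, [])) (some ([], 1, []))
  have hlow (x : IH G X) := Set.ext_iff.1 hF x
  simp only [Set.mem_ofPred_eq, ihLe_and_ihLe_iff_of_same_dom, inv_one, one_mul, true_and, restrict,
    List.nil_append, actW_one, resW_one] at hlow
  refine ⟨F.biUnion fun f => (f.map (·.2.2)).toFinset, Set.ext fun w => ⟨fun hw => ?_, ?_⟩⟩
  · obtain ⟨_ | a, hf, hle⟩ := (hlow (some (w, 1, w))).1 (.inr ⟨w, hw, rfl⟩)
    · simp [ihLe_none_iff] at hle
    obtain ⟨q, hq⟩ := (σ.ihLe_some_iff _ a).1 hle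
    exact ⟨a.2.2, Finset.mem_biUnion.2 ⟨some a, hf, by simp⟩, q, congrArg (·.2.2) hq⟩
  · rintro ⟨_, hmem, q, rfl⟩
    obtain ⟨_ | a, hf, ha⟩ := Finset.mem_biUnion.1 hmem
    · simp at ha
    obtain h | ⟨r, hr, ⟨⟩⟩ := (hlow (some a)).2 ⟨some a, hf, σ.ihLe_refl _⟩
    · simp at h
    · simp only [Option.map_some, Option.toFinset_some, Finset.mem_singleton] at ha
      exact ha ▸ σ.sFix_append hr q

end InverseHull

end SelfSimilarAction

open SelfSimilarAction in
theorem stmt19_general {G X : Type*} [Group G] [DecidableEq X]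
    (σ : SelfSimilarAction G X) :
    (σ.IHHausdorff ↔
      ∀ g : G, ∃ F : Finset (List X),
        {w : List X | σ.SFix g w} = {w : List X | ∃ f ∈ F, ∃ r : List X, w = f ++ r}) ∧
    (∀ (u : List X) (g : G) (v w : List X),
      σ.ihLe (some (w, 1, w)) (some (u, g, v)) ↔
        u = v ∧ ∃ z : List X, w = v ++ z ∧ σ.SFix g z) :=
  ⟨⟨σ.exists_finset_sFix_eq_of_ihHausdorff, σ.ihHausdorff_of_forall_sFix_eq⟩,
    σ.ihLe_idempotent_iff⟩

open SelfSimilarAction in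
/-- For a faithful self-similar action on `X*` with `|X| ≥ 2`, the inverse hull `S` is
a Hausdorff inverse semigroup iff for each `g ∈ G` there is a finite set `F_g ⊆ X*`
with `F_g X*` exactly the set of words strongly fixed by `g`.  Moreover, an idempotent
`w w*` lies below `u g v*` in the natural partial order iff `u = v`, `w = v z` and `g`
strongly fixes `z`. -/
theorem stmt19 {G X : Type*} [Group G] [DecidableEq X]
    (σ : SelfSimilarAction G X) (hX : ∃ x y : X, x ≠ y) (hfaith : σ.Faithful) :
    (σ.IHHausdorff ↔
      ∀ g : G, ∃ F : Finset (List X),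
        {w : List X | σ.SFix g w} = {w : List X | ∃ f ∈ F, ∃ r : List X, w = f ++ r}) ∧
    (∀ (u : List X) (g : G) (v w : List X),
      σ.ihLe (some (w, 1, w)) (some (u, g, v)) ↔
        u = v ∧ ∃ z : List X, w = v ++ z ∧ σ.SFix g z) :=
  stmt19_general σ
end
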